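/- Let p < q < r be primes. For every nonnegative integer k, a_{pqr}(k) = Σ_{m ≥ m₀} a_{pq}(m)·χ_k(m), where m₀ is the smallest integer such that m₀r + p + q ≥ k + 1 + pq. -/

import Mathlib

/-!
As `r ∤ pq`, `Φ_{pq}(X^r) = Φ_{pqr}(X) Φ_{pq}(X)`, and `Φ_{pq}(X) (X^p - 1)(X^q - 1) = (X^{pq} - 1)(X - 1)`;
hence `Φ_{pqr}(X) (X^{pq} - 1)(X - 1) = Φ_{pq}(X^r) (X^p - 1)(X^q - 1)`. Since `Φ_{pqr}` is a polynomial,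
the second difference `(X^{pq} - 1)(X - 1)` can be inverted at infinity by telescoping: `a_{pqr}(k)` is
`∑ₘ a_{pq}(m)` times a signed count, over `j ∈ {0, p, q, p + q}`, of the representations of
`mr - k - 1 + j` as `i + s pq` with `i ≥ 0`, `s ≥ 1`. These counts are `⌊(mr - k - 1 + j) / pq⌋` when
`m ≥ m₀` and `0` when `m < m₀`, and the alternating sum of the floors is `χ_k(m)`.
-/

open Polynomial

/-- The coefficient `a_{pq}(m)` of `Φ_{pq}`, extended by `0` to all integer indices. -/
noncomputable def apq (p q : ℕ) (m : ℤ) : ℤ :=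
  if 0 ≤ m then (cyclotomic (p * q) ℤ).coeff m.toNat else 0

open Classical in
/-- The function `χ_k(m)` associated to primes `p < q < r`. -/
noncomputable def chi (p q r : ℕ) (k m : ℤ) : ℤ :=
  if ∃ s : ℤ, m * r + q < k + 1 + s * p * q ∧ k + 1 + s * p * q ≤ m * r + q + p then 1
  else if ∃ s : ℤ, m * r < k + 1 + s * p * q ∧ k + 1 + s * p * q ≤ m * r + p then -1
  else 0

open Finset

namespace Polynomial

variable {R : Type*} [CommRing R]

def intCoeff (P : R[X]) (n : ℤ) : R :=
  if 0 ≤ n then P.coeff n.toNat else 0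

@[simp]
lemma intCoeff_natCast (P : R[X]) (n : ℕ) : P.intCoeff n = P.coeff n := by
  simp [intCoeff]

lemma intCoeff_of_neg (P : R[X]) {n : ℤ} (hn : n < 0) : P.intCoeff n = 0 :=
  if_neg (by omega)

lemma intCoeff_eq_zero_of_natDegree_lt (P : R[X]) {n : ℤ} (hn : (P.natDegree : ℤ) < n) :
    P.intCoeff n = 0 := by
  rw [intCoeff, if_pos (by omega)]
  exact coeff_eq_zero_of_natDegree_lt (by omega)

lemma intCoeff_one (n : ℤ) : (1 : R[X]).intCoeff n = if n = 0 then 1 else 0 := by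
  unfold intCoeff
  split_ifs with h0 h
  · simp [h]
  · rw [coeff_one, if_neg (by omega)]
  · omega
  · rfl

lemma intCoeff_sub (P Q : R[X]) (n : ℤ) : (P - Q).intCoeff n = P.intCoeff n - Q.intCoeff n := by
  unfold intCoeff
  split_ifs <;> simp

lemma intCoeff_sum {ι : Type*} (s : Finset ι) (f : ι → R[X]) (n : ℤ) :
    (∑ i ∈ s, f i).intCoeff n = ∑ i ∈ s, (f i).intCoeff n := by
  unfold intCoeff
  split_ifs <;> simp

lemma intCoeff_C_mul (a : R) (P : R[X]) (n : ℤ) : (C a * P).intCoeff n = a * P.intCoeff n := by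
  unfold intCoeff
  split_ifs <;> simp

lemma intCoeff_X_pow_mul (j : ℕ) (P : R[X]) (n : ℤ) :
    (X ^ j * P).intCoeff n = P.intCoeff (n - j) := by
  unfold intCoeff
  by_cases hn : 0 ≤ n
  · rw [if_pos hn, coeff_X_pow_mul']
    by_cases hj : (j : ℤ) ≤ n
    · rw [if_pos (by omega), if_pos (by omega)]
      congr 1
      omega
    · rw [if_neg (by omega), if_neg (by omega)]
  · rw [if_neg hn, if_neg (by omega)]

lemma intCoeff_X_pow_sub_one_mul (j : ℕ) (P : R[X]) (n : ℤ) :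
    ((X ^ j - 1) * P).intCoeff n = P.intCoeff (n - j) - P.intCoeff n := by
  rw [sub_mul, one_mul, intCoeff_sub, intCoeff_X_pow_mul]

lemma intCoeff_mul_X_pow_sub_one_mul_X_sub_one (P : R[X]) (j : ℕ) (n : ℤ) :
    (P * ((X ^ j - 1) * (X - 1))).intCoeff n =
      P.intCoeff n - P.intCoeff (n - 1) - P.intCoeff (n - j) + P.intCoeff (n - j - 1) := by
  rw [mul_comm, mul_assoc, intCoeff_X_pow_sub_one_mul, ← pow_one (X : R[X]),
    intCoeff_X_pow_sub_one_mul, intCoeff_X_pow_sub_one_mul]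
  push_cast
  ring_nf

lemma intCoeff_X_pow_sub_one_mul_X_pow_sub_one (a b : ℕ) (n : ℤ) :
    ((X ^ a - 1) * (X ^ b - 1) : R[X]).intCoeff n =
      (if n = a + b then 1 else 0) - (if n = a then 1 else 0) - (if n = b then 1 else 0) +
        if n = 0 then 1 else 0 := by
  rw [← mul_one (X ^ b - 1 : R[X]), intCoeff_X_pow_sub_one_mul, intCoeff_X_pow_sub_one_mul,
    intCoeff_X_pow_sub_one_mul]
  simp only [intCoeff_one, sub_sub, sub_eq_zero]
  abel

lemma intCoeff_expand_mul (r : ℕ) (P M : R[X]) {N : ℕ} (hN : P.natDegree < N) (n : ℤ) :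
    (expand R r P * M).intCoeff n = ∑ m ∈ range N, P.coeff m * M.intCoeff (n - m * r) := by
  conv_lhs => rw [P.as_sum_range_C_mul_X_pow' hN]
  simp only [map_sum, map_mul, expand_C, map_pow, expand_X, ← pow_mul', sum_mul, intCoeff_sum,
    mul_assoc, intCoeff_C_mul, intCoeff_X_pow_mul, Nat.cast_mul]

lemma sum_range_coeff_mul_ite_eq_sum_Icc (P : R[X]) (f : ℤ → R) (m₀ : ℤ) (N : ℕ) :
    ∑ m ∈ range (N + 1), P.coeff m * (if m₀ ≤ m then f m else 0) =
      ∑ m ∈ Icc m₀ (N : ℤ), P.intCoeff m * f m := by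
  refine sum_bij_ne_zero (fun m _ _ => (m : ℤ)) ?_ ?_ ?_ ?_
  · intro m hm hne
    have : m₀ ≤ m := by by_contra h; simp [h] at hne
    simp only [mem_range, mem_Icc] at hm ⊢
    omega
  · intro a _ _ b _ _ h
    exact_mod_cast h
  · intro m hm hne
    have h0 : 0 ≤ m := by by_contra h; simp [intCoeff_of_neg P (not_le.mp h)] at hne
    simp only [mem_Icc] at hm
    refine ⟨m.toNat, by simp only [mem_range]; omega, ?_, by simp [h0]⟩
    rwa [← intCoeff_natCast, Int.toNat_of_nonneg h0, if_pos hm.1]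
  · intro m _ hne
    have : m₀ ≤ m := by by_contra h; simp [h] at hne
    rw [if_pos this, intCoeff_natCast]

end Polynomial

lemma apq_eq_intCoeff (p q : ℕ) : apq p q = (cyclotomic (p * q) ℤ).intCoeff := rfl

section Cyclotomic

variable (R : Type*) [CommRing R] {p q r : ℕ}

lemma cyclotomic_prime_mul_prime_mul_X_pow_sub_one (hp : p.Prime) (hq : q.Prime) (hpq : p ≠ q) :
    cyclotomic (p * q) R * ((X ^ p - 1) * (X ^ q - 1)) = (X ^ (p * q) - 1) * (X - 1) := by
  have := Fact.mk hp
  have hqp : ¬q ∣ p := fun h => hpq ((Nat.prime_dvd_prime_iff_eq hq hp).1 h).symm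
  have h := congrArg (expand R q) (cyclotomic_prime_mul_X_sub_one R p)
  rw [map_mul, cyclotomic_expand_eq_cyclotomic_mul hq hqp, map_sub, map_sub, map_one, expand_X,
    map_pow, expand_X, ← pow_mul'] at h
  rw [← h, ← cyclotomic_prime_mul_X_sub_one R p]
  ring

lemma cyclotomic_three_primes_mul_X_pow_sub_one (hp : p.Prime) (hq : q.Prime) (hr : r.Prime)
    (hpq : p ≠ q) (hrp : r ≠ p) (hrq : r ≠ q) :
    cyclotomic (p * q * r) R * ((X ^ (p * q) - 1) * (X - 1)) =
      expand R r (cyclotomic (p * q) R) * ((X ^ p - 1) * (X ^ q - 1)) := by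
  have hr_dvd : ¬r ∣ p * q := by
    rw [hr.dvd_mul, Nat.prime_dvd_prime_iff_eq hr hp, Nat.prime_dvd_prime_iff_eq hr hq]
    tauto
  rw [cyclotomic_expand_eq_cyclotomic_mul hr hr_dvd,
    ← cyclotomic_prime_mul_prime_mul_X_pow_sub_one R hp hq hpq]
  ring

end Cyclotomic

section Telescoping

variable {G : Type*} [AddCommGroup G]

lemma eq_sum_range_sub_of_eq_zero (F : ℤ → G) (k d : ℤ) (S : ℕ) (h : F (k + S * d) = 0) :
    F k = ∑ s ∈ range S, (F (k + s * d) - F (k + (s + 1) * d)) := by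
  have := sum_range_sub' (fun s : ℕ => F (k + s * d)) S
  push_cast at this
  rw [this, h, sub_zero, zero_mul, add_zero]

/-- Inverting the second difference `(1 - X) (1 - X ^ c)` at infinity. -/
lemma eq_sum_sum_of_second_difference (A B : ℤ → G) {N c : ℤ}
    (hB : ∀ n, B n = A n - A (n - 1) - A (n - c) + A (n - c - 1)) (hA : ∀ n, N ≤ n → A n = 0)
    (k : ℤ) {I S : ℕ} (hI : N ≤ k + I) (hS : N ≤ k + S * c) :
    A k = ∑ i ∈ range I, ∑ s ∈ range S, B (k + 1 + i + (s + 1) * c) := by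
  rw [eq_sum_range_sub_of_eq_zero A k 1 I (hA _ (by simpa using hI))]
  refine sum_congr rfl fun i _ => ?_
  have h := eq_sum_range_sub_of_eq_zero (fun n => A (n - 1) - A n) (k + 1 + i) c S
    (by rw [hA _ (by omega), hA _ (by omega), sub_zero])
  rw [show k + i * 1 = k + 1 + i - 1 by ring, show k + (i + 1) * 1 = k + 1 + i by ring, h]
  refine sum_congr rfl fun s _ => ?_
  rw [hB, show k + 1 + i + (s + 1) * c - c = k + 1 + i + s * c by ring]
  abel

end Telescoping

lemma sum_range_ite_natCast_eq (I : ℕ) (x : ℤ) :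
    (∑ i ∈ range I, if (i : ℤ) = x then (1 : ℤ) else 0) = if 0 ≤ x ∧ x < I then 1 else 0 := by
  induction I with
  | zero => simp
  | succ I ih =>
    rw [sum_range_succ, ih]
    split_ifs <;> push_cast at * <;> omega

lemma card_filter_range_succ_mul_le (S : ℕ) {c w : ℤ} (hc : 0 < c) (hw : w < (S + 1) * c) :
    #{s ∈ range S | ((s : ℕ) + 1 : ℤ) * c ≤ w} = (w / c).toNat := by
  rw [← card_range (w / c).toNat]
  congr 1
  ext s
  have : w / c < S + 1 := (Int.ediv_lt_iff_lt_mul hc).2 hw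
  simp only [mem_filter, mem_range, Int.lt_toNat, ← Int.le_ediv_iff_mul_le hc]
  omega

lemma sum_range_sum_range_ite_add_mul_eq (I S : ℕ) {c t : ℤ} (hc : 0 < c) (hI : t - c < I)
    (hS : t < (S + 1) * c) :
    (∑ i ∈ range I, ∑ s ∈ range S, if (i : ℤ) + (s + 1) * c = t then (1 : ℤ) else 0) =
      (t / c).toNat := by
  rw [sum_comm]
  have inner (s : ℕ) : (∑ i ∈ range I, if (i : ℤ) + (s + 1) * c = t then (1 : ℤ) else 0) =
      if ((s : ℤ) + 1) * c ≤ t then 1 else 0 := by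
    have hcs : c ≤ ((s : ℤ) + 1) * c := le_mul_of_one_le_left hc.le (by omega)
    simp_rw [← eq_sub_iff_add_eq, sum_range_ite_natCast_eq]
    exact if_congr (by omega) rfl rfl
  simp_rw [inner, sum_boole, card_filter_range_succ_mul_le S hc hS]

lemma Polynomial.sum_sum_intCoeff_X_pow_sub_one_mul_X_pow_sub_one (a b I S : ℕ) {c : ℤ} (Y : ℤ)
    (hc : 0 < c) (hI : Y + a + b - c < I) (hS : Y + a + b < (S + 1) * c) :
    ∑ i ∈ range I, ∑ s ∈ range S,
        ((X ^ a - 1) * (X ^ b - 1) : ℤ[X]).intCoeff (i + (s + 1) * c - Y) =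
      ((Y + a + b) / c).toNat - ((Y + a) / c).toNat - ((Y + b) / c).toNat + (Y / c).toNat := by
  have count (t : ℤ) (ht : t ≤ Y + a + b) := sum_range_sum_range_ite_add_mul_eq I S hc
    (t := t) (by omega) (by omega)
  simp only [intCoeff_X_pow_sub_one_mul_X_pow_sub_one, sub_eq_iff_eq_add', ← add_assoc, add_zero,
    sum_add_distrib, sum_sub_distrib]
  rw [count _ le_rfl, count (Y + a) (by omega), count (Y + b) (by omega), count Y (by omega)]

open Classical in
lemma ediv_add_sub_ediv_eq_ite {c a : ℤ} (z : ℤ) (hc : 0 < c) (ha : 0 ≤ a) (hac : a ≤ c) :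
    (z + a) / c - z / c = if ∃ s : ℤ, z < s * c ∧ s * c ≤ z + a then 1 else 0 := by
  have h_mono : z / c ≤ (z + a) / c := Int.ediv_le_ediv hc (by omega)
  have h_step : (z + a) / c ≤ z / c + 1 := by
    calc (z + a) / c ≤ (z + 1 * c) / c := Int.ediv_le_ediv hc (by omega)
      _ = z / c + 1 := Int.add_mul_ediv_right _ _ hc.ne'
  split_ifs with h
  · obtain ⟨s, hzs, hsz⟩ := h
    have : z / c < s := (Int.ediv_lt_iff_lt_mul hc).2 hzs
    have : s ≤ (z + a) / c := (Int.le_ediv_iff_mul_le hc).2 hsz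
    omega
  · push Not at h
    have : (z + a) / c ≤ z / c :=
      (Int.le_ediv_iff_mul_le hc).2 (not_lt.1 fun hz => (h _ hz).not_ge (Int.ediv_mul_le _ hc.ne'))
    omega

lemma chi_eq_ediv {p q : ℕ} (r : ℕ) (hp : 2 ≤ p) (hpq : p < q) (k m : ℤ) :
    chi p q r k m =
      (m * r - k - 1 + p + q) / (p * q) - (m * r - k - 1 + p) / (p * q) -
        (m * r - k - 1 + q) / (p * q) + (m * r - k - 1) / (p * q) := by
  set Y := m * r - k - 1
  have hc : (p : ℤ) + q ≤ p * q := by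
    have : p + q ≤ p * q := by nlinarith
    exact_mod_cast this
  have hpq' : (p : ℤ) < q := by exact_mod_cast hpq
  have hc₀ : (0 : ℤ) < p * q := by linarith
  have hp_le : (p : ℤ) ≤ p * q := by linarith
  have h_plus := ediv_add_sub_ediv_eq_ite (Y + q) hc₀ (Nat.cast_nonneg p) hp_le
  have h_minus := ediv_add_sub_ediv_eq_ite Y hc₀ (Nat.cast_nonneg p) hp_le
  have iff_plus : (∃ s : ℤ, m * r + q < k + 1 + s * p * q ∧ k + 1 + s * p * q ≤ m * r + q + p) ↔
      ∃ s : ℤ, Y + q < s * (p * q) ∧ s * (p * q) ≤ Y + q + p :=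
    exists_congr fun s => by rw [← mul_assoc]; omega
  have iff_minus : (∃ s : ℤ, m * r < k + 1 + s * p * q ∧ k + 1 + s * p * q ≤ m * r + p) ↔
      ∃ s : ℤ, Y < s * (p * q) ∧ s * (p * q) ≤ Y + p :=
    exists_congr fun s => by rw [← mul_assoc]; omega
  -- the two windows lie within distance `p + q ≤ pq` of each other, so they cannot both meet `pqℤ`
  have exclusive : ¬((∃ s : ℤ, Y + q < s * (p * q) ∧ s * (p * q) ≤ Y + q + p) ∧
      ∃ s : ℤ, Y < s * (p * q) ∧ s * (p * q) ≤ Y + p) := by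
    rintro ⟨⟨s, hs₁, hs₂⟩, ⟨t, ht₁, ht₂⟩⟩
    have hts : t < s := lt_of_mul_lt_mul_right (by linarith) (by positivity : (0 : ℤ) ≤ p * q)
    nlinarith
  rw [show (Y + p + q) / (p * q) - (Y + p) / (p * q) - (Y + q) / (p * q) + Y / (p * q) =
      ((Y + q + p) / (p * q) - (Y + q) / (p * q)) - ((Y + p) / (p * q) - Y / (p * q)) by
    rw [add_right_comm Y]; ring, h_plus, h_minus]
  unfold chi
  rw [iff_plus, iff_minus]
  split_ifs <;> simp_all

lemma sum_sum_intCoeff_eq_ite_chi {p q r k : ℕ} {m₀ : ℤ} (hp : 2 ≤ p) (hpq : p < q)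
    (hm₀ : k + 1 + p * q ≤ m₀ * r + p + q)
    (hm₀min : ∀ m : ℤ, m < m₀ → ¬((k : ℤ) + 1 + p * q ≤ m * r + p + q)) {m : ℕ} (hm : m ≤ p * q) :
    ∑ i ∈ range (p * q * r), ∑ s ∈ range r,
        ((X ^ p - 1) * (X ^ q - 1) : ℤ[X]).intCoeff (k + 1 + i + (s + 1) * (p * q) - m * r) =
      if m₀ ≤ m then chi p q r k m else 0 := by
  set Y : ℤ := m * r - k - 1
  have hc : (p : ℤ) + q ≤ p * q := by
    have : p + q ≤ p * q := by nlinarith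
    exact_mod_cast this
  have hc₀ : (0 : ℤ) < p * q := lt_of_lt_of_le (by omega) hc
  have hmr : (m : ℤ) * r ≤ p * q * r := by exact_mod_cast Nat.mul_le_mul_right r hm
  simp_rw [show ∀ i s : ℕ, (k + 1 + i + (s + 1) * (p * q) - m * r : ℤ) = i + (s + 1) * (p * q) - Y
    from fun i s => by ring]
  rw [sum_sum_intCoeff_X_pow_sub_one_mul_X_pow_sub_one _ _ _ _ _ hc₀ (by push_cast; linarith)
    (by linarith)]
  split_ifs with h
  · have hY : 0 ≤ Y := by
      have : m₀ * r ≤ (m : ℤ) * r := mul_le_mul_of_nonneg_right h (by positivity)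
      linarith
    have hnonneg (w : ℤ) (hw : 0 ≤ w) : ((w / (p * q)).toNat : ℤ) = w / (p * q) :=
      Int.toNat_of_nonneg (Int.ediv_nonneg hw hc₀.le)
    rw [chi_eq_ediv r hp hpq, hnonneg _ (by linarith), hnonneg _ (by linarith),
      hnonneg _ (by linarith), hnonneg _ hY]
  · have hsmall : Y + p + q < p * q := by
      have := hm₀min m (by omega)
      linarith
    have hzero (w : ℤ) (hw : w < p * q) : (w / (p * q)).toNat = 0 := by
      have : w / (p * q) < 1 := (Int.ediv_lt_iff_lt_mul hc₀).2 (by linarith)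
      omega
    rw [hzero _ hsmall, hzero _ (by linarith), hzero _ (by linarith), hzero _ (by linarith)]
    simp

/-- Zhao–Zhang: for primes `p < q < r` and `k ≥ 0`,
`a_{pqr}(k) = Σ_{m ≥ m₀} a_{pq}(m)·χ_k(m)`, where `m₀` is the smallest integer with
`m₀ r + p + q ≥ k + 1 + pq` (the sum effectively ranges over `m₀ ≤ m ≤ pq`, since
`a_{pq}(m) = 0` for `m > φ(pq)`). -/
theorem stmt_8 (p q r : ℕ) (hp : p.Prime) (hq : q.Prime) (hr : r.Prime)
    (hpq : p < q) (hqr : q < r) (k : ℕ) (m₀ : ℤ)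
    (hm₀ : k + 1 + p * q ≤ m₀ * r + p + q)
    (hm₀min : ∀ m : ℤ, m < m₀ → ¬ ((k : ℤ) + 1 + p * q ≤ m * r + p + q)) :
    (cyclotomic (p * q * r) ℤ).coeff k =
      ∑ m ∈ Finset.Icc m₀ ((p : ℤ) * q), apq p q m * chi p q r k m := by
  have hp₂ := hp.two_le
  have hq₂ := hq.two_le
  have hdeg : (cyclotomic (p * q * r) ℤ).natDegree < p * q * r := by
    rw [natDegree_cyclotomic]
    exact Nat.totient_lt _ (by have := Nat.mul_le_mul (Nat.mul_le_mul hp₂ hq₂) hr.two_le; omega)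
  have hdeg' : (cyclotomic (p * q) ℤ).natDegree < p * q + 1 := by
    rw [natDegree_cyclotomic]
    exact Nat.lt_succ_of_le (Nat.totient_le _)
  have hrec (n : ℤ) := congrArg (intCoeff · n) (cyclotomic_three_primes_mul_X_pow_sub_one ℤ hp hq hr
    hpq.ne (by omega) (by omega))
  simp only [intCoeff_mul_X_pow_sub_one_mul_X_sub_one, intCoeff_expand_mul _ _ _ hdeg'] at hrec
  rw [← intCoeff_natCast, eq_sum_sum_of_second_difference _ _ (fun n => (hrec n).symm)
    (N := (p * q * r : ℕ)) (fun n hn => intCoeff_eq_zero_of_natDegree_lt _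
      (lt_of_lt_of_le (by exact_mod_cast hdeg) hn)) k (I := p * q * r) (S := r)
    (by omega) (by push_cast; nlinarith)]
  rw [sum_congr rfl fun i _ => sum_comm, sum_comm]
  simp_rw [← mul_sum]
  push_cast
  rw [sum_congr rfl fun m hm => by
    rw [sum_sum_intCoeff_eq_ite_chi hp₂ hpq hm₀ hm₀min (Nat.lt_succ_iff.1 (mem_range.1 hm))],
    sum_range_coeff_mul_ite_eq_sum_Icc, Nat.cast_mul, apq_eq_intCoeff]
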